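/- Let A and B be n×n complex positive semidefinite matrices and let 1 ≤ i_1 < i_2 < ... < i_k ≤ n be any indices. Then ∏_{t=1}^k λ_{i_t}(A + B)^{1/k} ≥ ∏_{t=1}^k λ_{i_t}(A)^{1/k} + ∏_{t=1}^k λ_{n−t+1}(B)^{1/k}. -/

import Mathlib

/-!
Induction on `n`. When `k = n` the indices exhaust the spectrum and the claim is Minkowski's
determinant inequality `det A ^ (1/n) + det B ^ (1/n) ≤ det (A + B) ^ (1/n)`: writing
`A = Dᴴ D` and `B = Dᴴ C D`, it reduces to `1 + det C ^ (1/n) ≤ det (1 + C) ^ (1/n)`, which is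
AM–GM applied to the eigenvalues of `C`.

When `k < n` some index `p` is missed by `i`. A dimension count gives a nonzero `w` lying both in
the span of the eigenvectors of `A` of index `≥ p` and in that of the eigenvectors of `A + B` of
index `≤ p`. Compress `A` and `B` to the hyperplane `w⊥`, which contains the eigenvectors of `A`
of index `< p` and those of `A + B` of index `> p`. By Courant–Fischer, once index `p` is deleted,
compression does not decrease the eigenvalues of `A` and does not increase those of `A + B`,
while Cauchy interlacing bounds the `k` smallest eigenvalues of the compression of `B` below by
those of `B`. The induction hypothesis in dimension `n - 1` concludes.
-/

open Matrix
open scoped ComplexOrder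

/-- The `t`-th largest eigenvalue (0-indexed) of a Hermitian matrix
(junk value `0` if the matrix is not Hermitian). -/
noncomputable def eigval {n : ℕ} (A : Matrix (Fin n) (Fin n) ℂ) (t : Fin n) : ℝ :=
  if h : A.IsHermitian then h.eigenvalues (Tuple.sort h.eigenvalues t.rev) else 0

/-- The `t`-th largest singular value (0-indexed) of a square complex matrix. -/
noncomputable def singval {n : ℕ} (X : Matrix (Fin n) (Fin n) ℂ) (t : Fin n) : ℝ :=
  Real.sqrt (eigval (Xᴴ * X) t)

theorem Real.prod_rpow_le_prod_rpow {ι : Type*} (s : Finset ι) {f g : ι → ℝ}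
    (hf : ∀ i ∈ s, 0 ≤ f i) (hfg : ∀ i ∈ s, f i ≤ g i) {r : ℝ} (hr : 0 ≤ r) :
    ∏ i ∈ s, f i ^ r ≤ ∏ i ∈ s, g i ^ r :=
  Finset.prod_le_prod (fun i hi => Real.rpow_nonneg (hf i hi) r)
    fun i hi => Real.rpow_le_rpow (hf i hi) (hfg i hi) hr

theorem Real.prod_rpow_add_prod_rpow_le {ι : Type*} {s : Finset ι} (hs : s.Nonempty)
    {f g : ι → ℝ} (hf : ∀ i ∈ s, 0 ≤ f i) (hg : ∀ i ∈ s, 0 ≤ g i) :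
    (∏ i ∈ s, f i) ^ (s.card : ℝ)⁻¹ + (∏ i ∈ s, g i) ^ (s.card : ℝ)⁻¹ ≤
      (∏ i ∈ s, (f i + g i)) ^ (s.card : ℝ)⁻¹ := by
  set r : ℝ := (s.card : ℝ)⁻¹ with hr_def
  have hr : 0 < r := by have := hs.card_pos; positivity
  by_cases hzero : ∃ i ∈ s, f i + g i = 0
  · obtain ⟨i, hi, hfg⟩ := hzero
    rw [Finset.prod_eq_zero hi (by linarith [hf i hi, hg i hi] : f i = 0),
      Finset.prod_eq_zero hi (by linarith [hf i hi, hg i hi] : g i = 0), Real.zero_rpow hr.ne',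
      zero_add]
    exact Real.rpow_nonneg (Finset.prod_nonneg fun j hj => add_nonneg (hf j hj) (hg j hj)) r
  push Not at hzero
  have hpos : ∀ i ∈ s, 0 < f i + g i := fun i hi =>
    (add_nonneg (hf i hi) (hg i hi)).lt_of_ne' (hzero i hi)
  set c := (∏ i ∈ s, (f i + g i)) ^ r
  -- weighted AM–GM for the ratios `u i / (f i + g i)`, with all weights equal to `r`
  have amgm : ∀ u : ι → ℝ, (∀ i ∈ s, 0 ≤ u i) →
      (∏ i ∈ s, u i) ^ r ≤ c * ∑ i ∈ s, r * (u i / (f i + g i)) := by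
    intro u hu
    have hratio : ∀ i ∈ s, 0 ≤ u i / (f i + g i) := fun i hi =>
      div_nonneg (hu i hi) (hpos i hi).le
    calc (∏ i ∈ s, u i) ^ r = c * ∏ i ∈ s, (u i / (f i + g i)) ^ r := by
          rw [Real.finsetProd_rpow s _ hratio, Finset.prod_div_distrib,
            Real.div_rpow (Finset.prod_nonneg hu) (Finset.prod_pos hpos).le,
            mul_div_cancel₀ _ (Real.rpow_pos_of_pos (Finset.prod_pos hpos) r).ne']
      _ ≤ c * ∑ i ∈ s, r * (u i / (f i + g i)) := by
          refine mul_le_mul_of_nonneg_left ?_ (Real.rpow_nonneg (Finset.prod_pos hpos).le r)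
          exact Real.geom_mean_le_arith_mean_weighted s (fun _ => r) _ (fun _ _ => hr.le)
            (by simp [hr_def, hs.card_pos.ne']) hratio
  have hsum : ∑ i ∈ s, r * (f i / (f i + g i)) + ∑ i ∈ s, r * (g i / (f i + g i)) = 1 := by
    rw [← Finset.sum_add_distrib, Finset.sum_congr rfl fun i hi => by
      rw [← mul_add, ← add_div, div_self (hpos i hi).ne', mul_one]]
    simp [hr_def, hs.card_pos.ne']
  calc _ ≤ c * ∑ i ∈ s, r * (f i / (f i + g i)) + c * ∑ i ∈ s, r * (g i / (f i + g i)) :=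
        add_le_add (amgm f hf) (amgm g hg)
    _ = c := by rw [← mul_add, hsum, mul_one]

theorem Submodule.exists_ne_zero_mem_of_finrank_lt_add {K V : Type*} [DivisionRing K]
    [AddCommGroup V] [Module K V] [FiniteDimensional K V] {S T : Submodule K V}
    (h : Module.finrank K V < Module.finrank K S + Module.finrank K T) :
    ∃ x ≠ 0, x ∈ S ∧ x ∈ T := by
  by_contra! hST
  exact (finrank_add_finrank_le_of_disjoint (disjoint_def.mpr fun x hS hT =>
    by_contra fun hx => hST x hx hS hT)).not_gt h

theorem Submodule.finrank_add_finrank_le_finrank_inf_add {K V : Type*} [DivisionRing K]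
    [AddCommGroup V] [Module K V] [FiniteDimensional K V] (S T : Submodule K V) :
    Module.finrank K S + Module.finrank K T ≤
      Module.finrank K ↥(S ⊓ T) + Module.finrank K V := by
  rw [← finrank_sup_add_finrank_inf_eq, add_comm (Module.finrank K ↥(S ⊔ T))]
  exact Nat.add_le_add_left (finrank_le _) _

namespace Matrix

variable {ι : Type*} [Fintype ι] [DecidableEq ι]

theorem IsHermitian.det_one_add {C : Matrix ι ι ℂ} (hC : C.IsHermitian) :
    (1 + C).det = ∏ i, (1 + (hC.eigenvalues i : ℂ)) := by
  set V : Matrix ι ι ℂ := (hC.eigenvectorUnitary : Matrix ι ι ℂ)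
  have hVV : V * star V = 1 := Unitary.coe_mul_star_self _
  have hVV' : star V * V = 1 := Unitary.coe_star_mul_self _
  have hspec : 1 + C = V * (1 + diagonal fun i => (hC.eigenvalues i : ℂ)) * star V := by
    conv_lhs => rw [hC.spectral_theorem, Unitary.conjStarAlgAut_apply]
    rw [Matrix.mul_add, Matrix.add_mul, Matrix.mul_one, hVV]
    rfl
  rw [hspec, det_conj_of_mul_eq_one hVV hVV', ← diagonal_one, diagonal_add, det_diagonal]

theorem PosSemidef.one_add_rpow_det_le {C : Matrix ι ι ℂ} [Nonempty ι] (hC : C.PosSemidef) :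
    1 + C.det.re ^ (Fintype.card ι : ℝ)⁻¹ ≤ (1 + C).det.re ^ (Fintype.card ι : ℝ)⁻¹ := by
  have h := Real.prod_rpow_add_prod_rpow_le Finset.univ_nonempty (f := fun _ => (1 : ℝ))
    (fun _ _ => zero_le_one) (fun i _ => hC.eigenvalues_nonneg i)
  rw [Finset.prod_const_one, Real.one_rpow, Finset.card_univ] at h
  have h1 : (1 + C).det.re = ∏ i, (1 + hC.1.eigenvalues i) := by
    rw [hC.1.det_one_add]; norm_cast
  have h2 : C.det.re = ∏ i, hC.1.eigenvalues i := by
    rw [hC.1.det_eq_prod_eigenvalues]; norm_cast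
  rwa [h1, h2]

theorem PosSemidef.re_det_nonneg {A : Matrix ι ι ℂ} (hA : A.PosSemidef) : 0 ≤ A.det.re :=
  (Complex.nonneg_iff.mp hA.det_nonneg).1

theorem PosSemidef.ofReal_re_det {A : Matrix ι ι ℂ} (hA : A.PosSemidef) :
    ((A.det.re : ℝ) : ℂ) = A.det :=
  Complex.ext rfl (Complex.nonneg_iff.mp hA.det_nonneg).2

open scoped MatrixOrder in
theorem PosDef.rpow_det_add_rpow_det_le [Nonempty ι] {A B : Matrix ι ι ℂ} (hA : A.PosDef)
    (hB : B.PosSemidef) :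
    A.det.re ^ (Fintype.card ι : ℝ)⁻¹ + B.det.re ^ (Fintype.card ι : ℝ)⁻¹ ≤
      (A + B).det.re ^ (Fintype.card ι : ℝ)⁻¹ := by
  obtain ⟨D, rfl⟩ := CStarAlgebra.nonneg_iff_eq_star_mul_self.mp hA.posSemidef.nonneg
  rw [star_eq_conjTranspose] at hA ⊢
  have hD : IsUnit D.det := isUnit_of_mul_isUnit_right (x := Dᴴ.det) <| by
    rw [← det_mul]; exact (isUnit_iff_isUnit_det _).mp hA.isUnit
  set C := (D⁻¹)ᴴ * B * D⁻¹
  have hC : C.PosSemidef := hB.conjTranspose_mul_mul_same _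
  have hBC : B = Dᴴ * C * D := by
    have hD' : IsUnit Dᴴ.det := by rw [det_conjTranspose]; exact hD.star
    simp only [C, conjTranspose_nonsing_inv, ← Matrix.mul_assoc, mul_nonsing_inv _ hD',
      Matrix.one_mul]
    rw [Matrix.mul_assoc, nonsing_inv_mul _ hD, Matrix.mul_one]
  have hdet : ∀ X : Matrix ι ι ℂ, (Dᴴ * X * D).det = (Dᴴ * D).det * X.det := fun X => by
    simp only [det_mul]; ring
  have hre : ∀ X : Matrix ι ι ℂ, (Dᴴ * X * D).det.re = (Dᴴ * D).det.re * X.det.re := fun X => by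
    rw [hdet, ← hA.posSemidef.ofReal_re_det, Complex.re_ofReal_mul, Complex.ofReal_re]
  have hAB : Dᴴ * D + B = Dᴴ * (1 + C) * D := by
    rw [hBC, Matrix.mul_add, Matrix.add_mul, Matrix.mul_one]
  have ha := hA.posSemidef.re_det_nonneg
  rw [hAB, hBC, hre, hre, Real.mul_rpow ha hC.re_det_nonneg,
    Real.mul_rpow ha (PosSemidef.one.add hC).re_det_nonneg, ← mul_one_add]
  exact mul_le_mul_of_nonneg_left hC.one_add_rpow_det_le (Real.rpow_nonneg ha _)

theorem PosSemidef.rpow_det_add_rpow_det_le [Nonempty ι] {A B : Matrix ι ι ℂ} (hA : A.PosSemidef)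
    (hB : B.PosSemidef) :
    A.det.re ^ (Fintype.card ι : ℝ)⁻¹ + B.det.re ^ (Fintype.card ι : ℝ)⁻¹ ≤
      (A + B).det.re ^ (Fintype.card ι : ℝ)⁻¹ := by
  by_cases hA0 : A.det = 0
  · by_cases hB0 : B.det = 0
    · rw [hA0, hB0, Complex.zero_re, Real.zero_rpow (by positivity), zero_add]
      exact Real.rpow_nonneg (hA.add hB).re_det_nonneg _
    · rw [add_comm, add_comm A]
      exact (hB.posDef_iff_det_ne_zero.mpr hB0).rpow_det_add_rpow_det_le hA
  · exact (hA.posDef_iff_det_ne_zero.mpr hA0).rpow_det_add_rpow_det_le hB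

end Matrix

section SortedSpectrum

variable {N : ℕ} {M : Matrix (Fin N) (Fin N) ℂ}

noncomputable def eigvalPerm (hM : M.IsHermitian) : Equiv.Perm (Fin N) :=
  Fin.revPerm.trans (Tuple.sort hM.eigenvalues)

theorem eigval_eq_eigenvalues_eigvalPerm (hM : M.IsHermitian) (t : Fin N) :
    eigval M t = hM.eigenvalues (eigvalPerm hM t) := by
  rw [eigval, dif_pos hM]; rfl

theorem eigval_antitone (hM : M.IsHermitian) : Antitone (eigval M) := fun s t hst => by
  simp only [eigval_eq_eigenvalues_eigvalPerm hM]
  exact Tuple.monotone_sort hM.eigenvalues (Fin.rev_le_rev.mpr hst)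

theorem eigval_nonneg (hM : M.PosSemidef) (t : Fin N) : 0 ≤ eigval M t := by
  rw [eigval_eq_eigenvalues_eigvalPerm hM.1]; exact hM.eigenvalues_nonneg _

theorem det_eq_prod_eigval (hM : M.IsHermitian) : M.det = ((∏ t, eigval M t : ℝ) : ℂ) := by
  rw [hM.det_eq_prod_eigenvalues, Complex.ofReal_prod]
  simp only [eigval_eq_eigenvalues_eigvalPerm hM]
  exact (Equiv.prod_comp (eigvalPerm hM) fun i => (hM.eigenvalues i : ℂ)).symm

noncomputable def eigvec (hM : M.IsHermitian) (t : Fin N) : Fin N → ℂ :=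
  WithLp.ofLp (hM.eigenvectorBasis (eigvalPerm hM t))

theorem mulVec_eigvec (hM : M.IsHermitian) (t : Fin N) :
    M *ᵥ eigvec hM t = eigval M t • eigvec hM t := by
  rw [eigval_eq_eigenvalues_eigvalPerm hM]; exact hM.mulVec_eigenvectorBasis _

theorem star_eigvec_dotProduct_eigvec (hM : M.IsHermitian) (s t : Fin N) :
    star (eigvec hM s) ⬝ᵥ eigvec hM t = if s = t then 1 else 0 := by
  rw [dotProduct_comm, eigvec, eigvec, ← EuclideanSpace.inner_eq_star_dotProduct,
    orthonormal_iff_ite.mp hM.eigenvectorBasis.orthonormal]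
  simp only [(eigvalPerm hM).injective.eq_iff]

theorem star_eigvec_dotProduct_sum (hM : M.IsHermitian) (F : Finset (Fin N)) (c : Fin N → ℂ)
    (s : Fin N) :
    star (eigvec hM s) ⬝ᵥ ∑ t ∈ F, c t • eigvec hM t = if s ∈ F then c s else 0 := by
  simp only [dotProduct_sum, dotProduct_smul, star_eigvec_dotProduct_eigvec, smul_eq_mul,
    mul_ite, mul_one, mul_zero, Finset.sum_ite_eq]

theorem star_sum_dotProduct_sum (hM : M.IsHermitian) (F G : Finset (Fin N)) (c d : Fin N → ℂ) :
    star (∑ s ∈ G, d s • eigvec hM s) ⬝ᵥ ∑ t ∈ F, c t • eigvec hM t =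
      ∑ s ∈ G, star (d s) * if s ∈ F then c s else 0 := by
  simp only [star_sum, star_smul, sum_dotProduct, smul_dotProduct, star_eigvec_dotProduct_sum,
    smul_eq_mul]

theorem linearIndependent_eigvec (hM : M.IsHermitian) : LinearIndependent ℂ (eigvec hM) := by
  refine Fintype.linearIndependent_iff.mpr fun c hc s => ?_
  simpa [hc] using (star_eigvec_dotProduct_sum hM Finset.univ c s).symm

noncomputable def eigvecSpan (hM : M.IsHermitian) (F : Finset (Fin N)) :
    Submodule ℂ (Fin N → ℂ) :=
  Submodule.span ℂ (eigvec hM '' F)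

theorem mem_eigvecSpan (hM : M.IsHermitian) {F : Finset (Fin N)} {x : Fin N → ℂ} :
    x ∈ eigvecSpan hM F ↔ ∃ c : Fin N → ℂ, ∑ t ∈ F, c t • eigvec hM t = x :=
  Submodule.mem_span_image_finset_iff_exists_fun' ℂ

theorem finrank_eigvecSpan (hM : M.IsHermitian) (F : Finset (Fin N)) :
    Module.finrank ℂ (eigvecSpan hM F) = F.card := by
  rw [eigvecSpan, Set.image_eq_range,
    finrank_span_eq_card (b := fun t : (F : Set (Fin N)) => eigvec hM t)
    ((linearIndependent_eigvec hM).comp _ Subtype.val_injective)]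
  exact Fintype.card_coe F

theorem star_dotProduct_eq_zero_of_disjoint (hM : M.IsHermitian) {F G : Finset (Fin N)}
    (hFG : Disjoint F G) {x y : Fin N → ℂ} (hx : x ∈ eigvecSpan hM F)
    (hy : y ∈ eigvecSpan hM G) : star y ⬝ᵥ x = 0 := by
  obtain ⟨c, rfl⟩ := (mem_eigvecSpan hM).mp hx
  obtain ⟨d, rfl⟩ := (mem_eigvecSpan hM).mp hy
  rw [star_sum_dotProduct_sum]
  exact Finset.sum_eq_zero fun s hs => by
    rw [if_neg (Finset.disjoint_right.mp hFG hs), mul_zero]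

theorem star_dotProduct_mulVec_sum_eigvec (hM : M.IsHermitian) (F : Finset (Fin N))
    (c : Fin N → ℂ) :
    star (∑ t ∈ F, c t • eigvec hM t) ⬝ᵥ (M *ᵥ ∑ t ∈ F, c t • eigvec hM t) =
      ∑ t ∈ F, (eigval M t : ℂ) * (star (c t) * c t) := by
  have hMx : M *ᵥ ∑ t ∈ F, c t • eigvec hM t = ∑ t ∈ F, (eigval M t * c t) • eigvec hM t := by
    simp only [mulVec_sum, mulVec_smul, mulVec_eigvec, ← Complex.coe_smul, smul_smul, mul_comm]
  rw [hMx, star_sum_dotProduct_sum]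
  exact Finset.sum_congr rfl fun t ht => by rw [if_pos ht]; ring

theorem star_dotProduct_sum_eigvec (hM : M.IsHermitian) (F : Finset (Fin N)) (c : Fin N → ℂ) :
    star (∑ t ∈ F, c t • eigvec hM t) ⬝ᵥ ∑ t ∈ F, c t • eigvec hM t =
      ∑ t ∈ F, star (c t) * c t := by
  rw [star_sum_dotProduct_sum]
  exact Finset.sum_congr rfl fun t ht => by rw [if_pos ht]

theorem le_star_dotProduct_mulVec_of_mem_eigvecSpan (hM : M.IsHermitian) {F : Finset (Fin N)}
    {a : ℝ} (ha : ∀ t ∈ F, a ≤ eigval M t) {x : Fin N → ℂ} (hx : x ∈ eigvecSpan hM F) :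
    (a : ℂ) * (star x ⬝ᵥ x) ≤ star x ⬝ᵥ (M *ᵥ x) := by
  obtain ⟨c, rfl⟩ := (mem_eigvecSpan hM).mp hx
  rw [star_dotProduct_mulVec_sum_eigvec, star_dotProduct_sum_eigvec, Finset.mul_sum]
  exact Finset.sum_le_sum fun t ht =>
    mul_le_mul_of_nonneg_right (Complex.real_le_real.mpr (ha t ht)) (star_mul_self_nonneg _)

theorem star_dotProduct_mulVec_le_of_mem_eigvecSpan (hM : M.IsHermitian) {F : Finset (Fin N)}
    {a : ℝ} (ha : ∀ t ∈ F, eigval M t ≤ a) {x : Fin N → ℂ} (hx : x ∈ eigvecSpan hM F) :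
    star x ⬝ᵥ (M *ᵥ x) ≤ (a : ℂ) * (star x ⬝ᵥ x) := by
  obtain ⟨c, rfl⟩ := (mem_eigvecSpan hM).mp hx
  rw [star_dotProduct_mulVec_sum_eigvec, star_dotProduct_sum_eigvec, Finset.mul_sum]
  exact Finset.sum_le_sum fun t ht =>
    mul_le_mul_of_nonneg_right (Complex.real_le_real.mpr (ha t ht)) (star_mul_self_nonneg _)

theorem le_eigval_of_forall_le (hM : M.IsHermitian) (j : Fin N) {T : Submodule ℂ (Fin N → ℂ)}
    (hT : j.val + 1 ≤ Module.finrank ℂ T) {a : ℝ}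
    (ha : ∀ x ∈ T, (a : ℂ) * (star x ⬝ᵥ x) ≤ star x ⬝ᵥ (M *ᵥ x)) : a ≤ eigval M j := by
  obtain ⟨x, hx0, hxT, hxS⟩ := Submodule.exists_ne_zero_mem_of_finrank_lt_add
    (S := T) (T := eigvecSpan hM (Finset.Ici j)) (by
      rw [finrank_eigvecSpan, Fin.card_Ici, Module.finrank_fin_fun]; omega)
  have hupper := star_dotProduct_mulVec_le_of_mem_eigvecSpan hM
    (fun t ht => eigval_antitone hM (Finset.mem_Ici.mp ht)) hxS
  exact Complex.real_le_real.mp <| le_of_mul_le_mul_right ((ha x hxT).trans hupper)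
    (dotProduct_star_self_pos_iff.mpr hx0)

theorem eigval_le_of_forall_le (hM : M.IsHermitian) (j : Fin N) {T : Submodule ℂ (Fin N → ℂ)}
    (hT : N ≤ Module.finrank ℂ T + j.val) {a : ℝ}
    (ha : ∀ x ∈ T, star x ⬝ᵥ (M *ᵥ x) ≤ (a : ℂ) * (star x ⬝ᵥ x)) : eigval M j ≤ a := by
  obtain ⟨x, hx0, hxT, hxS⟩ := Submodule.exists_ne_zero_mem_of_finrank_lt_add
    (S := T) (T := eigvecSpan hM (Finset.Iic j)) (by
      rw [finrank_eigvecSpan, Fin.card_Iic, Module.finrank_fin_fun]; omega)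
  have hlower := le_star_dotProduct_mulVec_of_mem_eigvecSpan hM
    (fun t ht => eigval_antitone hM (Finset.mem_Iic.mp ht)) hxS
  exact Complex.real_le_real.mp <| le_of_mul_le_mul_right (hlower.trans (ha x hxT))
    (dotProduct_star_self_pos_iff.mpr hx0)

end SortedSpectrum

section Compression

variable {N m : ℕ} {M : Matrix (Fin N) (Fin N) ℂ} {U : Matrix (Fin N) (Fin m) ℂ}

theorem star_dotProduct_conjTranspose_mul_mul_mulVec (U : Matrix (Fin N) (Fin m) ℂ)
    (X : Matrix (Fin N) (Fin N) ℂ) (y : Fin m → ℂ) :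
    star y ⬝ᵥ ((Uᴴ * X * U) *ᵥ y) = star (U *ᵥ y) ⬝ᵥ (X *ᵥ (U *ᵥ y)) := by
  rw [← mulVec_mulVec, ← mulVec_mulVec, dotProduct_mulVec, star_mulVec]

theorem star_mulVec_dotProduct_mulVec (hU : Uᴴ * U = 1) (y : Fin m → ℂ) :
    star (U *ᵥ y) ⬝ᵥ (U *ᵥ y) = star y ⬝ᵥ y := by
  simpa [hU] using (star_dotProduct_conjTranspose_mul_mul_mulVec U 1 y).symm

theorem injective_mulVecLin (hU : Uᴴ * U = 1) : Function.Injective U.mulVecLin :=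
  Function.LeftInverse.injective (g := Uᴴ.mulVecLin) fun y => by simp [mulVec_mulVec, hU]

theorem finrank_comap_mulVecLin (hU : Uᴴ * U = 1) {T : Submodule ℂ (Fin N → ℂ)}
    (hTU : T ≤ LinearMap.range U.mulVecLin) :
    Module.finrank ℂ (T.comap U.mulVecLin) = Module.finrank ℂ T := by
  rw [(Submodule.equivMapOfInjective _ (injective_mulVecLin hU) _).finrank_eq,
    Submodule.map_comap_eq, inf_eq_right.mpr hTU]

theorem le_eigval_conjTranspose_mul_mul (hM : M.IsHermitian) (hU : Uᴴ * U = 1) (j : Fin m)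
    {T : Submodule ℂ (Fin N → ℂ)} (hTU : T ≤ LinearMap.range U.mulVecLin)
    (hT : j.val + 1 ≤ Module.finrank ℂ T) {a : ℝ}
    (ha : ∀ x ∈ T, (a : ℂ) * (star x ⬝ᵥ x) ≤ star x ⬝ᵥ (M *ᵥ x)) :
    a ≤ eigval (Uᴴ * M * U) j := by
  refine le_eigval_of_forall_le (isHermitian_conjTranspose_mul_mul U hM) j
    (hT.trans (finrank_comap_mulVecLin hU hTU).ge) fun y hy => ?_
  rw [star_dotProduct_conjTranspose_mul_mul_mulVec, ← star_mulVec_dotProduct_mulVec hU]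
  exact ha _ hy

theorem eigval_conjTranspose_mul_mul_le (hM : M.IsHermitian) (hU : Uᴴ * U = 1) (j : Fin m)
    {T : Submodule ℂ (Fin N → ℂ)} (hTU : T ≤ LinearMap.range U.mulVecLin)
    (hT : m ≤ Module.finrank ℂ T + j.val) {a : ℝ}
    (ha : ∀ x ∈ T, star x ⬝ᵥ (M *ᵥ x) ≤ (a : ℂ) * (star x ⬝ᵥ x)) :
    eigval (Uᴴ * M * U) j ≤ a := by
  refine eigval_le_of_forall_le (isHermitian_conjTranspose_mul_mul U hM) j
    (hT.trans (by rw [finrank_comap_mulVecLin hU hTU])) fun y hy => ?_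
  rw [star_dotProduct_conjTranspose_mul_mul_mulVec, ← star_mulVec_dotProduct_mulVec hU]
  exact ha _ hy

theorem eigval_le_eigval_conjTranspose_mul_mul_of_le_finrank (hM : M.IsHermitian)
    (hU : Uᴴ * U = 1) {i : Fin N} {j : Fin m}
    (h : j.val + 1 ≤
      Module.finrank ℂ ↥(eigvecSpan hM (Finset.Iic i) ⊓ LinearMap.range U.mulVecLin)) :
    eigval M i ≤ eigval (Uᴴ * M * U) j :=
  le_eigval_conjTranspose_mul_mul hM hU j inf_le_right h fun _ hx =>
    le_star_dotProduct_mulVec_of_mem_eigvecSpan hM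
      (fun _ ht => eigval_antitone hM (Finset.mem_Iic.mp ht)) hx.1

theorem eigval_conjTranspose_mul_mul_le_eigval_of_le_finrank (hM : M.IsHermitian)
    (hU : Uᴴ * U = 1) {i : Fin N} {j : Fin m}
    (h : m ≤
      Module.finrank ℂ ↥(eigvecSpan hM (Finset.Ici i) ⊓ LinearMap.range U.mulVecLin) + j.val) :
    eigval (Uᴴ * M * U) j ≤ eigval M i :=
  eigval_conjTranspose_mul_mul_le hM hU j inf_le_right h fun _ hx =>
    star_dotProduct_mulVec_le_of_mem_eigvecSpan hM
      (fun _ ht => eigval_antitone hM (Finset.mem_Ici.mp ht)) hx.1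

theorem finrank_range_mulVecLin (hU : Uᴴ * U = 1) :
    Module.finrank ℂ (LinearMap.range U.mulVecLin) = m := by
  rw [LinearMap.finrank_range_of_inj (injective_mulVecLin hU), Module.finrank_fin_fun]

theorem eigval_le_eigval_conjTranspose_mul_mul (hM : M.IsHermitian) (hU : Uᴴ * U = 1)
    {i : Fin N} {j : Fin m} (hij : j.val + N ≤ i.val + m) :
    eigval M i ≤ eigval (Uᴴ * M * U) j := by
  refine eigval_le_eigval_conjTranspose_mul_mul_of_le_finrank hM hU ?_
  have := Submodule.finrank_add_finrank_le_finrank_inf_add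
    (eigvecSpan hM (Finset.Iic i)) (LinearMap.range U.mulVecLin)
  rw [finrank_eigvecSpan, Fin.card_Iic, finrank_range_mulVecLin hU, Module.finrank_fin_fun] at this
  omega

theorem eigval_conjTranspose_mul_mul_le_eigval (hM : M.IsHermitian) (hU : Uᴴ * U = 1)
    {i : Fin N} {j : Fin m} (hij : i.val ≤ j.val) :
    eigval (Uᴴ * M * U) j ≤ eigval M i := by
  refine eigval_conjTranspose_mul_mul_le_eigval_of_le_finrank hM hU ?_
  have := Submodule.finrank_add_finrank_le_finrank_inf_add
    (eigvecSpan hM (Finset.Ici i)) (LinearMap.range U.mulVecLin)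
  rw [finrank_eigvecSpan, Fin.card_Ici, finrank_range_mulVecLin hU, Module.finrank_fin_fun] at this
  omega

end Compression

theorem exists_isometry_mem_range_of_star_dotProduct_eq_zero {n : ℕ} {w : Fin (n + 1) → ℂ}
    (hw : w ≠ 0) :
    ∃ U : Matrix (Fin (n + 1)) (Fin n) ℂ, Uᴴ * U = 1 ∧
      ∀ x, star w ⬝ᵥ x = 0 → x ∈ LinearMap.range U.mulVecLin := by
  have : Fact (Module.finrank ℂ (EuclideanSpace ℂ (Fin (n + 1))) = n + 1) :=
    ⟨finrank_euclideanSpace_fin⟩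
  have hw' : WithLp.toLp 2 w ≠ 0 := by simpa using hw
  set b := OrthonormalBasis.fromOrthogonalSpanSingleton (𝕜 := ℂ) n hw'
  refine ⟨Matrix.of fun x c => (b c : EuclideanSpace ℂ (Fin (n + 1))) x, ?_, fun x hx => ?_⟩
  · ext c d
    have := orthonormal_iff_ite.mp b.orthonormal c d
    simp only [Submodule.coe_inner, PiLp.inner_apply, RCLike.inner_apply] at this
    simpa [Matrix.mul_apply, Matrix.one_apply, mul_comm] using this
  · have hxK : WithLp.toLp 2 x ∈ (ℂ ∙ WithLp.toLp 2 w)ᗮ := by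
      rw [Submodule.mem_orthogonal_singleton_iff_inner_right, EuclideanSpace.inner_toLp_toLp,
        dotProduct_comm, hx]
    refine ⟨b.repr ⟨_, hxK⟩, funext fun r => ?_⟩
    have := congrArg (fun z : (ℂ ∙ WithLp.toLp 2 w)ᗮ => (z : EuclideanSpace ℂ (Fin (n + 1))) r)
      (b.sum_repr ⟨_, hxK⟩)
    simpa [mulVec, dotProduct, mul_comm] using this

theorem exists_isometry_eigval_succAbove {n : ℕ} {A C : Matrix (Fin (n + 1)) (Fin (n + 1)) ℂ}
    (hA : A.IsHermitian) (hC : C.IsHermitian) (p : Fin (n + 1)) :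
    ∃ U : Matrix (Fin (n + 1)) (Fin n) ℂ, Uᴴ * U = 1 ∧ ∀ j : Fin n,
      eigval A (p.succAbove j) ≤ eigval (Uᴴ * A * U) j ∧
        eigval (Uᴴ * C * U) j ≤ eigval C (p.succAbove j) := by
  obtain ⟨w, hw0, hwA, hwC⟩ := Submodule.exists_ne_zero_mem_of_finrank_lt_add
    (S := eigvecSpan hA (Finset.Ici p)) (T := eigvecSpan hC (Finset.Iic p)) (by
      rw [finrank_eigvecSpan, finrank_eigvecSpan, Fin.card_Ici, Fin.card_Iic,
        Module.finrank_fin_fun]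
      omega)
  obtain ⟨U, hU, hrange⟩ := exists_isometry_mem_range_of_star_dotProduct_eq_zero hw0
  have hle : ∀ {M : Matrix (Fin (n + 1)) (Fin (n + 1)) ℂ} (hM : M.IsHermitian)
      {F G : Finset (Fin (n + 1))}, Disjoint F G → w ∈ eigvecSpan hM G →
      eigvecSpan hM F ≤ LinearMap.range U.mulVecLin := fun hM _ _ hFG hw x hx =>
    hrange x (star_dotProduct_eq_zero_of_disjoint hM hFG hx hw)
  refine ⟨U, hU, fun j => ?_⟩
  rcases lt_or_ge (Fin.castSucc j) p with hjp | hpj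
  · rw [Fin.succAbove_of_castSucc_lt _ _ hjp]
    refine ⟨eigval_le_eigval_conjTranspose_mul_mul_of_le_finrank hA hU ?_,
      eigval_conjTranspose_mul_mul_le_eigval hC hU le_rfl⟩
    have hdisj : Disjoint (Finset.Iic (Fin.castSucc j)) (Finset.Ici p) :=
      Finset.disjoint_left.mpr fun t ht ht' =>
        (Finset.mem_Iic.mp ht).not_gt ((Finset.mem_Ici.mp ht').trans_lt' hjp)
    rw [inf_eq_left.mpr (hle hA hdisj hwA), finrank_eigvecSpan, Fin.card_Iic, Fin.val_castSucc]
  · rw [Fin.succAbove_of_le_castSucc _ _ hpj]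
    refine ⟨eigval_le_eigval_conjTranspose_mul_mul hA hU (by rw [Fin.val_succ]; omega),
      eigval_conjTranspose_mul_mul_le_eigval_of_le_finrank hC hU ?_⟩
    have hdisj : Disjoint (Finset.Ici (Fin.succ j)) (Finset.Iic p) :=
      Finset.disjoint_left.mpr fun t ht ht' =>
        (Finset.mem_Ici.mp ht).not_gt ((Finset.mem_Iic.mp ht').trans_lt
          (hpj.trans_lt Fin.castSucc_lt_succ))
    rw [inf_eq_left.mpr (hle hC hdisj hwC), finrank_eigvecSpan, Fin.card_Ici, Fin.val_succ]
    omega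

theorem prod_eigval_rpow_add_prod_eigval_rpow_le {N : ℕ} (hN : 0 < N)
    {A B : Matrix (Fin N) (Fin N) ℂ} (hA : A.PosSemidef) (hB : B.PosSemidef) :
    ∏ t, eigval A t ^ (N : ℝ)⁻¹ + ∏ t, eigval B t ^ (N : ℝ)⁻¹ ≤
      ∏ t, eigval (A + B) t ^ (N : ℝ)⁻¹ := by
  have : Nonempty (Fin N) := ⟨⟨0, hN⟩⟩
  have hdet : ∀ {M : Matrix (Fin N) (Fin N) ℂ}, M.PosSemidef →
      ∏ t, eigval M t ^ (N : ℝ)⁻¹ = M.det.re ^ (Fintype.card (Fin N) : ℝ)⁻¹ := fun hM => by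
    rw [Real.finsetProd_rpow _ _ fun t _ => eigval_nonneg hM t, det_eq_prod_eigval hM.1,
      Complex.ofReal_re, Fintype.card_fin]
  rw [hdet hA, hdet hB, hdet (hA.add hB)]
  exact hA.rpow_det_add_rpow_det_le hB

theorem exists_strictMono_eq_succAbove_comp {k n : ℕ} (hk : k < n + 1)
    {i : Fin k → Fin (n + 1)} (hi : StrictMono i) :
    ∃ (p : Fin (n + 1)) (i' : Fin k → Fin n), StrictMono i' ∧ i = p.succAbove ∘ i' := by
  obtain ⟨p, hp⟩ : ∃ p, p ∉ Set.range i := by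
    by_contra! h
    have := Fintype.card_le_of_surjective i h
    simp only [Fintype.card_fin] at this
    omega
  choose i' hi' using fun s => Fin.exists_succAbove_eq fun h : i s = p => hp ⟨s, h⟩
  refine ⟨p, i', fun s t hst => ?_, funext fun s => (hi' s).symm⟩
  exact (Fin.succAbove_lt_succAbove_iff (p := p)).mp (by rw [hi', hi']; exact hi hst)

theorem prod_eig_root_add_ge_general (n k : ℕ) (hk : 0 < k) (hkn : k ≤ n)
    (A B : Matrix (Fin n) (Fin n) ℂ) (hA : A.PosSemidef) (hB : B.PosSemidef)
    (i : Fin k → Fin n) (hi : StrictMono i) :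
    ∏ t, eigval (A + B) (i t) ^ ((k : ℝ)⁻¹) ≥
      ∏ t, eigval A (i t) ^ ((k : ℝ)⁻¹) +
        ∏ t : Fin k, eigval B ((Fin.castLE hkn t).rev) ^ ((k : ℝ)⁻¹) := by
  induction n generalizing k with
  | zero => omega
  | succ n ih =>
    rcases hkn.eq_or_lt with rfl | hlt
    · rw [hi.eq_id, Fin.castLE_rfl, Fintype.prod_equiv Fin.revPerm
        (fun t => eigval B (id t).rev ^ _) (fun t => eigval B t ^ _) fun _ => rfl]
      exact prod_eigval_rpow_add_prod_eigval_rpow_le n.succ_pos hA hB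
    obtain ⟨p, i', hi', rfl⟩ := exists_strictMono_eq_succAbove_comp hlt hi
    obtain ⟨U, hU, hUp⟩ := exists_isometry_eigval_succAbove hA.1 (hA.add hB).1 p
    have hkn' : k ≤ n := Nat.le_of_lt_succ hlt
    have hr : (0 : ℝ) ≤ (k : ℝ)⁻¹ := by positivity
    have hBU (t : Fin k) :
        eigval B (Fin.castLE hkn t).rev ≤ eigval (Uᴴ * B * U) (Fin.castLE hkn' t).rev :=
      eigval_le_eigval_conjTranspose_mul_mul hB.1 hU (by
        simp only [Fin.val_rev, Fin.val_castLE]; omega)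
    have hIH := ih k hk hkn' _ _ (hA.conjTranspose_mul_mul_same U)
      (hB.conjTranspose_mul_mul_same U) i' hi'
    rw [← Matrix.add_mul, ← Matrix.mul_add] at hIH
    calc _ ≤ ∏ t, eigval (Uᴴ * A * U) (i' t) ^ (k : ℝ)⁻¹ +
          ∏ t : Fin k, eigval (Uᴴ * B * U) (Fin.castLE hkn' t).rev ^ (k : ℝ)⁻¹ :=
          add_le_add
            (Real.prod_rpow_le_prod_rpow _ (fun _ _ => eigval_nonneg hA _)
              (fun t _ => (hUp (i' t)).1) hr)
            (Real.prod_rpow_le_prod_rpow _ (fun _ _ => eigval_nonneg hB _) (fun t _ => hBU t) hr)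
      _ ≤ _ := hIH
      _ ≤ _ := Real.prod_rpow_le_prod_rpow _
          (fun _ _ => eigval_nonneg ((hA.add hB).conjTranspose_mul_mul_same U) _)
          (fun t _ => (hUp (i' t)).2) hr

theorem prod_eig_root_add_ge (n k : ℕ) (hn : 0 < n) (hk : 0 < k) (hkn : k ≤ n)
    (A B : Matrix (Fin n) (Fin n) ℂ) (hA : A.PosSemidef) (hB : B.PosSemidef)
    (i : Fin k → Fin n) (hi : StrictMono i) :
    ∏ t, eigval (A + B) (i t) ^ ((k : ℝ)⁻¹) ≥
      ∏ t, eigval A (i t) ^ ((k : ℝ)⁻¹) +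
        ∏ t : Fin k, eigval B ((Fin.castLE hkn t).rev) ^ ((k : ℝ)⁻¹) :=
  prod_eig_root_add_ge_general n k hk hkn A B hA hB i hi
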